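/- arXiv:1703.05332 — 3 statements merged into one kernel-verified Lean document; each statement's English description precedes it below -/
import Mathlib

section
/- Let d ≥ 1 be an integer, let V be a finite nonempty subset of ℤ^d (with the Euclidean norm ‖·‖ on ℝ^d), let n ≥ 2, and let in : Fin n → V be injective. Let R : V × V → ℂ be a unitary matrix satisfying the Lieb–Robinson promise |R(j,k)| ≤ min(1, exp((v·t − ‖j − k‖)/ξ)) for all j,k ∈ V, where v ≥ 0, t ≥ 0, ξ > 0. Assume the occupied sites lie on a cubic sublattice of spacing 2L: in(i) − in(i') ∈ (2L)·ℤ^d for all i, i', where L > 0. Then there exist constants C > 0 and L₀ > 0 depending only on d and ξ such that, if L ≥ L₀, v·t ≤ 0.9·L, and n·L^{d−1}·exp((v·t − L)/ξ) ≤ 1, the total variation distance between the bosonic and the distinguishable-particle output distributions, namely (1/(2·n!)) · Σ_{out : Fin n → V} | |Σ_{σ ∈ Perm(Fin n)} Π_{i=1}^{n} R(in(i), out(σ(i)))|² − Σ_{σ ∈ Perm(Fin n)} Π_{i=1}^{n} |R(in(i), out(σ(i)))|² |, is at most C · n² · L^{2(d−1)} · exp(2(v·t − L)/ξ). -/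
/-!
Expanding `‖∑_σ P_σ‖²`, the bosonic and the distinguishable-particle weights differ only by the
cross terms `P_σ * conj P_τ` with `σ ≠ τ`. Summed in modulus over all outputs these factorise:
the total is `n! * ∑_{ρ ≠ 1} ∏_i S i (ρ i)`, where `S i k = ∑_w ‖R (in i) w‖ * ‖R (in k) w‖` is
the overlap of the moduli of two rows of `R`. Unitarity gives `S i i = 1`, and the exponential
decay of `R` together with the spacing `2L` of the occupied sites bounds every off-diagonal row
sum of `S` by `s = K * exp ((v t - L) / ξ)`. Grouping permutations by their support, those moving
`m` particles contribute at most `choose n m * s ^ m`, and `∑_{m ≥ 2} choose n m * s ^ m` is at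
most `(n s)² * exp (n s)`, where `n s` is bounded by the last hypothesis.
-/

open scoped BigOperators

/-- Euclidean norm of a point of the integer lattice `ℤ^d`. -/
noncomputable def euclNormZ {d : ℕ} (x : Fin d → ℤ) : ℝ :=
  Real.sqrt (∑ a, ((x a : ℝ)) ^ 2)

open Finset Real

lemma euclNormZ_eq_norm {d : ℕ} (x : Fin d → ℤ) :
    euclNormZ x = ‖WithLp.toLp 2 (fun a => (x a : ℝ))‖ := by
  simp [euclNormZ, EuclideanSpace.norm_eq]

lemma euclNormZ_sub_eq_dist {d : ℕ} (x y : Fin d → ℤ) :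
    euclNormZ (x - y) =
      dist (WithLp.toLp 2 (fun a => (x a : ℝ))) (WithLp.toLp 2 (fun a => (y a : ℝ))) := by
  rw [dist_eq_norm, ← WithLp.toLp_sub, euclNormZ_eq_norm]
  simp only [Pi.sub_apply, Int.cast_sub]
  rfl

lemma euclNormZ_sub_le {d : ℕ} (x y w : Fin d → ℤ) :
    euclNormZ (x - y) ≤ euclNormZ (x - w) + euclNormZ (w - y) := by
  simpa only [euclNormZ_sub_eq_dist] using dist_triangle _ _ _

lemma euclNormZ_sub_comm {d : ℕ} (x y : Fin d → ℤ) :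
    euclNormZ (x - y) = euclNormZ (y - x) := by
  simp only [euclNormZ_sub_eq_dist, dist_comm]

lemma one_le_euclNormZ {d : ℕ} {x : Fin d → ℤ} (hx : x ≠ 0) : 1 ≤ euclNormZ x := by
  obtain ⟨a, ha⟩ := Function.ne_iff.mp hx
  calc (1 : ℝ) ≤ |(x a : ℝ)| := by exact_mod_cast Int.one_le_abs ha
    _ ≤ euclNormZ x := by
      simpa [euclNormZ_eq_norm] using PiLp.norm_apply_le (WithLp.toLp 2 (fun a => (x a : ℝ))) a

lemma euclNormZ_eq_mul_of_cast_eq {d : ℕ} {x y : Fin d → ℤ} {c : ℝ} (hc : 0 ≤ c)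
    (h : ∀ a, (x a : ℝ) = c * y a) : euclNormZ x = c * euclNormZ y := by
  simp only [euclNormZ_eq_norm, h]
  conv_rhs => rw [← norm_of_nonneg hc, ← norm_smul, ← WithLp.toLp_smul]
  rfl

lemma sum_exp_neg_mul_abs_le {c : ℝ} (hc : 0 < c) (S : Finset ℤ) :
    ∑ z ∈ S, exp (-(c * |(z : ℝ)|)) ≤ 2 / (1 - exp (-c)) := by
  set q := exp (-c)
  have hq : q < 1 := exp_lt_one_iff.mpr (neg_lt_zero.mpr hc)
  have hgeom (T : Finset ℕ) : ∑ k ∈ T, q ^ k ≤ (1 - q)⁻¹ := by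
    rw [← tsum_geometric_of_lt_one (exp_pos _).le hq]
    exact (summable_geometric_of_lt_one (exp_pos _).le hq).sum_le_tsum T fun _ _ => by positivity
  have hfiber (k : ℕ) : #{z ∈ S | z.natAbs = k} ≤ 2 := by
    refine (card_le_card (t := {(k : ℤ), -(k : ℤ)}) fun z hz => ?_).trans card_le_two
    rw [mem_filter] at hz
    rcases Int.natAbs_eq z with h | h <;> simp [hz.2 ▸ h]
  calc ∑ z ∈ S, exp (-(c * |(z : ℝ)|)) = ∑ z ∈ S, q ^ z.natAbs := by
        refine sum_congr rfl fun z _ => ?_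
        rw [← exp_nat_mul, Nat.cast_natAbs, Int.cast_abs]
        ring_nf
    _ = ∑ k ∈ S.image Int.natAbs, #{z ∈ S | z.natAbs = k} • q ^ k := sum_comp _ _
    _ ≤ ∑ k ∈ S.image Int.natAbs, 2 * q ^ k := by
        refine sum_le_sum fun k _ => ?_
        rw [nsmul_eq_mul]
        gcongr
        exact_mod_cast hfiber k
    _ ≤ 2 / (1 - q) := by
        rw [← mul_sum, div_eq_mul_inv]
        gcongr
        exact hgeom _

noncomputable def latticeExpSumBound (d : ℕ) (c : ℝ) : ℝ := (2 / (1 - exp (-(c / d)))) ^ d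

lemma latticeExpSumBound_pos (d : ℕ) {c : ℝ} (hc : 0 < c) : 0 < latticeExpSumBound d c := by
  rcases Nat.eq_zero_or_pos d with rfl | hd
  · simp [latticeExpSumBound]
  · have := sub_pos.mpr (exp_lt_one_iff.mpr (neg_lt_zero.mpr (by positivity : 0 < c / d)))
    unfold latticeExpSumBound
    positivity

/-- Since `d * ‖x‖ ≥ ∑ a, |x a|`, the sum is dominated by a product of `d` two-sided geometric
series of ratio `exp (-c / d)`. -/
lemma sum_exp_neg_mul_euclNormZ_le {d : ℕ} {c : ℝ} (hc : 0 < c) (W : Finset (Fin d → ℤ)) :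
    ∑ x ∈ W, exp (-(c * euclNormZ x)) ≤ latticeExpSumBound d c := by
  set c' := c / d
  have hcoord (x : Fin d → ℤ) : exp (-(c * euclNormZ x)) ≤ ∏ a, exp (-(c' * |(x a : ℝ)|)) := by
    rw [← exp_sum, exp_le_exp, sum_neg_distrib, neg_le_neg_iff]
    calc ∑ a, c' * |(x a : ℝ)| ≤ ∑ _a : Fin d, c' * euclNormZ x := by
          gcongr with a
          simpa [euclNormZ_eq_norm] using PiLp.norm_apply_le (WithLp.toLp 2 (fun a => (x a : ℝ))) a
      _ = (d * c') * euclNormZ x := by simp [mul_assoc]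
      _ ≤ c * euclNormZ x := by
          gcongr
          · exact Real.sqrt_nonneg _
          · rcases eq_or_ne (d : ℝ) 0 with h | h
            · simp [h, hc.le]
            · exact (mul_div_cancel₀ c h).le
  set t : Fin d → Finset ℤ := fun a => W.image (· a)
  calc ∑ x ∈ W, exp (-(c * euclNormZ x))
      ≤ ∑ x ∈ Fintype.piFinset t, ∏ a, exp (-(c' * |(x a : ℝ)|)) :=
        (sum_le_sum fun x _ => hcoord x).trans <| sum_le_sum_of_subset_of_nonneg
          (fun x hx => Fintype.mem_piFinset.mpr fun a => mem_image_of_mem _ hx)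
          (fun _ _ _ => by positivity)
    _ = ∏ a, ∑ z ∈ t a, exp (-(c' * |(z : ℝ)|)) :=
        (prod_univ_sum t fun _ z => exp (-(c' * |(z : ℝ)|))).symm
    _ ≤ ∏ _a : Fin d, 2 / (1 - exp (-c')) :=
        prod_le_prod (fun _ _ => by positivity) fun a _ =>
          sum_exp_neg_mul_abs_le (div_pos hc (by exact_mod_cast a.pos)) _
    _ = latticeExpSumBound d c := by rw [prod_const, card_univ, Fintype.card_fin]; rfl

lemma sum_pow_div_factorial_Icc_two_le {y : ℝ} (hy : 0 ≤ y) (n : ℕ) :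
    ∑ m ∈ Icc 2 n, y ^ m / m.factorial ≤ y ^ 2 * exp y := by
  rw [← Ico_add_one_right_eq_Icc, sum_Ico_eq_sum_range, mul_comm]
  calc ∑ j ∈ range (n + 1 - 2), y ^ (2 + j) / (2 + j).factorial
      ≤ ∑ j ∈ range (n + 1 - 2), y ^ j / j.factorial * y ^ 2 := by
        gcongr with j
        rw [pow_add, mul_comm, mul_div_right_comm]
        gcongr
        exact Nat.le_add_left j 2
    _ ≤ exp y * y ^ 2 := by
        rw [← sum_mul]
        gcongr
        exact sum_le_exp_of_nonneg hy _

lemma sum_Icc_two_choose_mul_pow_le {x : ℝ} (hx : 0 ≤ x) (n : ℕ) :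
    ∑ m ∈ Icc 2 n, (n.choose m : ℝ) * x ^ m ≤ (n * x) ^ 2 * exp (n * x) :=
  calc ∑ m ∈ Icc 2 n, (n.choose m : ℝ) * x ^ m
      ≤ ∑ m ∈ Icc 2 n, (n * x) ^ m / m.factorial := by
        gcongr with m
        rw [mul_pow, mul_div_right_comm]
        gcongr
        exact Nat.choose_le_pow_div m n
    _ ≤ (n * x) ^ 2 * exp (n * x) := sum_pow_div_factorial_Icc_two_le (by positivity) n

section Permutations

variable {ι : Type*} [Fintype ι] [DecidableEq ι] {S : Matrix ι ι ℝ} {s : ℝ}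

lemma sum_prod_of_support_eq_le (hS : ∀ i k, 0 ≤ S i k) (hdiag : ∀ i, S i i ≤ 1)
    (hrow : ∀ i, ∑ k ∈ univ.erase i, S i k ≤ s) (M : Finset ι) :
    ∑ σ ∈ univ.filter (fun σ : Equiv.Perm ι => σ.support = M), ∏ i, S i (σ i) ≤ s ^ #M := by
  -- a permutation with support `M` is a function moving every point of `M` and fixing the rest
  set t : ι → Finset ι := fun i => if i ∈ M then univ.erase i else {i}
  have hmaps : ∀ σ ∈ univ.filter (fun σ : Equiv.Perm ι => σ.support = M),
      ⇑σ ∈ Fintype.piFinset t := by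
    intro σ hσ
    rw [mem_filter] at hσ
    refine Fintype.mem_piFinset.mpr fun i => ?_
    by_cases hi : σ i = i <;> simp [t, hi, ← hσ.2]
  calc ∑ σ ∈ univ.filter (fun σ : Equiv.Perm ι => σ.support = M), ∏ i, S i (σ i)
      = ∑ f ∈ (univ.filter (fun σ : Equiv.Perm ι => σ.support = M)).image
          (fun σ : Equiv.Perm ι => (σ : ι → ι)),
          ∏ i, S i (f i) := by
        rw [sum_image]
        exact fun σ _ τ _ h => Equiv.ext (congrFun h)
    _ ≤ ∑ f ∈ Fintype.piFinset t, ∏ i, S i (f i) :=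
        sum_le_sum_of_subset_of_nonneg (image_subset_iff.mpr hmaps)
          fun _ _ _ => prod_nonneg fun _ _ => hS _ _
    _ = ∏ i, ∑ k ∈ t i, S i k := (prod_univ_sum t S).symm
    _ ≤ ∏ i, if i ∈ M then s else 1 := by
        refine prod_le_prod (fun i _ => sum_nonneg fun _ _ => hS _ _) fun i _ => ?_
        by_cases hi : i ∈ M
        · simpa [t, hi] using hrow i
        · simpa [t, hi] using hdiag i
    _ = s ^ #M := by rw [Fintype.prod_ite_mem, prod_const]

lemma sum_prod_perm_ne_one_le (hS : ∀ i k, 0 ≤ S i k) (hdiag : ∀ i, S i i ≤ 1)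
    (hrow : ∀ i, ∑ k ∈ univ.erase i, S i k ≤ s) :
    ∑ σ ∈ univ.erase (1 : Equiv.Perm ι), ∏ i, S i (σ i) ≤
      ∑ m ∈ Icc 2 (Fintype.card ι), ((Fintype.card ι).choose m : ℝ) * s ^ m := by
  set F : Equiv.Perm ι → ℝ := fun σ => ∏ i, S i (σ i)
  have hcard : ∀ σ ∈ univ.erase (1 : Equiv.Perm ι), #σ.support ∈ Icc 2 (Fintype.card ι) :=
    fun σ hσ => mem_Icc.mpr ⟨Equiv.Perm.two_le_card_support_of_ne_one (ne_of_mem_erase hσ),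
      card_le_univ _⟩
  rw [← sum_fiberwise_of_maps_to hcard]
  refine sum_le_sum fun m _ => ?_
  set P := (univ.erase (1 : Equiv.Perm ι)).filter (fun σ => #σ.support = m)
  have hsupp : ∀ σ ∈ P, σ.support ∈ powersetCard m univ :=
    fun σ hσ => mem_powersetCard.mpr ⟨subset_univ _, (mem_filter.mp hσ).2⟩
  calc ∑ σ ∈ P, F σ = ∑ M ∈ powersetCard m univ, ∑ σ ∈ P.filter (·.support = M), F σ :=
        (sum_fiberwise_of_maps_to hsupp F).symm
    _ ≤ ∑ M ∈ powersetCard m univ, s ^ m := by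
        refine sum_le_sum fun M hM => ?_
        rw [← (mem_powersetCard.mp hM).2]
        refine le_trans ?_ (sum_prod_of_support_eq_le hS hdiag hrow M)
        exact sum_le_sum_of_subset_of_nonneg (monotone_filter_left _ (subset_univ _))
          fun _ _ _ => prod_nonneg fun _ _ => hS _ _
    _ = ((Fintype.card ι).choose m : ℝ) * s ^ m := by
        rw [sum_const, card_powersetCard, card_univ, nsmul_eq_mul]

end Permutations

lemma abs_norm_sum_sq_sub_sum_norm_sq_le {α E : Type*} [Fintype α] [DecidableEq α]
    [SeminormedAddCommGroup E] [InnerProductSpace ℝ E] (z : α → E) :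
    |‖∑ a, z a‖ ^ 2 - ∑ a, ‖z a‖ ^ 2| ≤ ∑ a, ∑ b ∈ univ.erase a, ‖z a‖ * ‖z b‖ := by
  have hexpand : ‖∑ a, z a‖ ^ 2 - ∑ a, ‖z a‖ ^ 2 =
      ∑ a, ∑ b ∈ univ.erase a, inner ℝ (z a) (z b) := by
    simp_rw [← real_inner_self_eq_norm_sq, sum_inner, inner_sum, ← sum_sub_distrib,
      sum_erase_eq_sub (mem_univ _)]
  rw [hexpand]
  refine (abs_sum_le_sum_abs _ _).trans (sum_le_sum fun a _ => ?_)
  exact (abs_sum_le_sum_abs _ _).trans (sum_le_sum fun b _ => abs_real_inner_le_norm _ _)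

lemma sum_prod_mul_prod_perm_eq {ι κ R : Type*} [Fintype ι] [DecidableEq ι] [Fintype κ]
    [CommSemiring R] (B : Matrix ι κ R) (σ τ : Equiv.Perm ι) :
    ∑ out : ι → κ, (∏ i, B i (out (σ i))) * ∏ i, B i (out (τ i)) =
      ∏ i, (B * B.transpose) i ((τ⁻¹ * σ) i) := by
  have hreindex (out : ι → κ) : (∏ i, B i (out (σ i))) * ∏ i, B i (out (τ i)) =
      ∏ j, B (σ⁻¹ j) (out j) * B (τ⁻¹ j) (out j) := by
    rw [prod_mul_distrib, ← Equiv.prod_comp σ (fun j => B (σ⁻¹ j) (out j)),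
      ← Equiv.prod_comp τ (fun j => B (τ⁻¹ j) (out j))]
    simp
  simp_rw [hreindex]
  rw [← Fintype.prod_sum fun j w => B (σ⁻¹ j) w * B (τ⁻¹ j) w, ← Equiv.prod_comp σ]
  simp [Matrix.mul_apply]

noncomputable def normOverlap {ι κ : Type*} [Fintype κ] (A : Matrix ι κ ℂ) : Matrix ι ι ℝ :=
  A.map (‖·‖) * (A.map (‖·‖)).transpose

lemma normOverlap_apply {ι κ : Type*} [Fintype κ] (A : Matrix ι κ ℂ) (i k : ι) :
    normOverlap A i k = ∑ w, ‖A i w‖ * ‖A k w‖ := by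
  simp [normOverlap, Matrix.mul_apply]

lemma normOverlap_submatrix_self_eq_one {ι κ : Type*} [Fintype κ] [DecidableEq κ] {U : Matrix κ κ ℂ}
    (hU : U ∈ Matrix.unitaryGroup κ ℂ) (r : ι → κ) (i : ι) :
    normOverlap (U.submatrix r id) i i = 1 := by
  have h := congrFun (congrFun (Matrix.mem_unitaryGroup_iff.mp hU) (r i)) (r i)
  simp only [Matrix.mul_apply, Matrix.star_apply, Matrix.one_apply_eq, RCLike.star_def,
    Complex.mul_conj, Complex.normSq_eq_norm_sq, sq] at h
  rw [normOverlap_apply]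
  exact_mod_cast h

section Interference

variable {ι κ : Type*} [Fintype ι] [DecidableEq ι] [Fintype κ]

lemma sum_erase_perm_mul_eq_sum_erase_one {M : Type*} [AddCommGroup M] (g : Equiv.Perm ι → M)
    (σ : Equiv.Perm ι) : ∑ τ ∈ univ.erase σ, g (τ⁻¹ * σ) = ∑ ρ ∈ univ.erase 1, g ρ := by
  rw [sum_erase_eq_sub (mem_univ _), sum_erase_eq_sub (mem_univ _), inv_mul_cancel,
    ← Equiv.sum_comp ((Equiv.inv _).trans (Equiv.mulRight σ)) g]
  rfl

lemma sum_abs_norm_sum_perm_sq_sub_le (A : Matrix ι κ ℂ) :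
    ∑ out : ι → κ, |‖∑ σ : Equiv.Perm ι, ∏ i, A i (out (σ i))‖ ^ 2
        - ∑ σ : Equiv.Perm ι, ∏ i, ‖A i (out (σ i))‖ ^ 2| ≤
      (Fintype.card ι).factorial *
        ∑ ρ ∈ univ.erase (1 : Equiv.Perm ι), ∏ i, normOverlap A i (ρ i) :=
  calc _ ≤ ∑ out : ι → κ, ∑ σ : Equiv.Perm ι, ∑ τ ∈ univ.erase σ,
          (∏ i, ‖A i (out (σ i))‖) * ∏ i, ‖A i (out (τ i))‖ := by
        gcongr with out
        simpa only [norm_prod, prod_pow] using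
          abs_norm_sum_sq_sub_sum_norm_sq_le fun σ : Equiv.Perm ι => ∏ i, A i (out (σ i))
    _ = ∑ σ : Equiv.Perm ι, ∑ τ ∈ univ.erase σ, ∏ i, normOverlap A i ((τ⁻¹ * σ) i) := by
        rw [sum_comm]
        refine sum_congr rfl fun σ _ => ?_
        rw [sum_comm]
        exact sum_congr rfl fun τ _ => sum_prod_mul_prod_perm_eq (A.map (‖·‖)) σ τ
    _ = (Fintype.card ι).factorial *
          ∑ ρ ∈ univ.erase (1 : Equiv.Perm ι), ∏ i, normOverlap A i (ρ i) := by
        simp_rw [sum_erase_perm_mul_eq_sum_erase_one (fun ρ => ∏ i, normOverlap A i (ρ i))]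
        rw [sum_const, card_univ, Fintype.card_perm, nsmul_eq_mul]

theorem sum_abs_norm_sum_perm_sq_sub_le_of_normOverlap (A : Matrix ι κ ℂ) {s : ℝ} (hs : 0 ≤ s)
    (hdiag : ∀ i, normOverlap A i i ≤ 1) (hrow : ∀ i, ∑ k ∈ univ.erase i, normOverlap A i k ≤ s) :
    ∑ out : ι → κ, |‖∑ σ : Equiv.Perm ι, ∏ i, A i (out (σ i))‖ ^ 2
        - ∑ σ : Equiv.Perm ι, ∏ i, ‖A i (out (σ i))‖ ^ 2| ≤
      (Fintype.card ι).factorial * ((Fintype.card ι * s) ^ 2 * exp (Fintype.card ι * s)) :=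
  (sum_abs_norm_sum_perm_sq_sub_le A).trans <| mul_le_mul_of_nonneg_left
    ((sum_prod_perm_ne_one_le (fun i k => by rw [normOverlap_apply]; positivity) hdiag hrow).trans
      (sum_Icc_two_choose_mul_pow_le hs _)) (by positivity)

end Interference

section LiebRobinson

variable {d : ℕ} {V : Finset (Fin d → ℤ)} {R : Matrix V V ℂ} {vt ξ : ℝ}

lemma sum_norm_mul_norm_le_of_decay (hξ : 0 < ξ)
    (hR : ∀ j k : V, ‖R j k‖ ≤ exp ((vt - euclNormZ (j - k : Fin d → ℤ)) / ξ)) (a b : V) :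
    ∑ w, ‖R a w‖ * ‖R b w‖ ≤ latticeExpSumBound d (1 / (100 * ξ)) *
      exp ((2 * vt - 99 / 100 * euclNormZ (a - b : Fin d → ℤ)) / ξ) := by
  set D := euclNormZ (a - b : Fin d → ℤ)
  set c := 1 / (100 * ξ)
  -- `‖a - w‖ + ‖b - w‖ ≥ ‖a - b‖`: giving up 1% of the decay in `‖a - b‖` leaves a factor
  -- decaying in `‖w - a‖`, which is summable over the lattice.
  have hterm (w : V) : ‖R a w‖ * ‖R b w‖ ≤
      exp ((2 * vt - 99 / 100 * D) / ξ) * exp (-(c * euclNormZ (w - a : Fin d → ℤ))) := by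
    set r := euclNormZ (w - a : Fin d → ℤ)
    set r' := euclNormZ (w - b : Fin d → ℤ)
    have htri : D ≤ r + r' := by
      have := euclNormZ_sub_le (a : Fin d → ℤ) b w
      rwa [euclNormZ_sub_comm (a : Fin d → ℤ) w] at this
    have hr' : 0 ≤ r' := Real.sqrt_nonneg _
    have hexp :
        (2 * vt - 99 / 100 * D) / ξ + -(c * r) = (2 * vt - 99 / 100 * D - r / 100) / ξ := by
      simp only [c]
      field_simp
      ring
    calc ‖R a w‖ * ‖R b w‖ ≤ exp ((vt - r) / ξ) * exp ((vt - r') / ξ) := by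
          have ha := hR a w
          have hb := hR b w
          rw [euclNormZ_sub_comm] at ha hb
          exact mul_le_mul ha hb (norm_nonneg _) (exp_pos _).le
      _ ≤ _ := by
        rw [← exp_add, ← exp_add, exp_le_exp, hexp, ← add_div]
        exact div_le_div_of_nonneg_right (by linarith) hξ.le
  calc ∑ w, ‖R a w‖ * ‖R b w‖
      ≤ ∑ w : V, exp ((2 * vt - 99 / 100 * D) / ξ) *
          exp (-(c * euclNormZ (w - a : Fin d → ℤ))) :=
        sum_le_sum fun w _ => hterm w
    _ = exp ((2 * vt - 99 / 100 * D) / ξ) *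
          ∑ y ∈ V.image (· - (a : Fin d → ℤ)), exp (-(c * euclNormZ y)) := by
        rw [← mul_sum, sum_image fun _ _ _ _ h => sub_left_injective h,
          sum_coe_sort V fun w : Fin d → ℤ => exp (-(c * euclNormZ (w - (a : Fin d → ℤ))))]
    _ ≤ _ := by
        rw [mul_comm]
        gcongr
        exact sum_exp_neg_mul_euclNormZ_le (by positivity) _

lemma sum_normOverlap_erase_le {ι : Type*} [Fintype ι] [DecidableEq ι] (hξ : 0 < ξ)
    (hR : ∀ j k : V, ‖R j k‖ ≤ exp ((vt - euclNormZ (j - k : Fin d → ℤ)) / ξ))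
    {inp : ι → V} (hinj : Function.Injective inp) {L : ℝ} (hL : 0 < L)
    (hlat : ∀ i i', ∃ x : Fin d → ℤ, ∀ a : Fin d,
      (((inp i : Fin d → ℤ) a : ℝ) - ((inp i' : Fin d → ℤ) a : ℝ)) = 2 * L * (x a : ℝ))
    (hLξ : 100 * ξ ≤ L) (hvt : vt ≤ 0.9 * L) (i : ι) :
    ∑ k ∈ univ.erase i, normOverlap (R.submatrix inp id) i k ≤
      latticeExpSumBound d (1 / (100 * ξ)) * latticeExpSumBound d 4 * exp ((vt - L) / ξ) := by
  choose φ hφ using hlat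
  have hdist (k : ι) : euclNormZ (inp i - inp k : Fin d → ℤ) = 2 * L * euclNormZ (φ i k) :=
    euclNormZ_eq_mul_of_cast_eq (by positivity) fun a => by
      rw [Pi.sub_apply, Int.cast_sub]; exact hφ i k a
  have hφ_inj : Set.InjOn (φ i) (univ.erase i : Finset ι) := by
    intro k _ k' _ h
    refine hinj (Subtype.ext (funext fun a => ?_))
    have h₁ := hφ i k a
    have h₂ := hφ i k' a
    rw [h] at h₁
    exact_mod_cast (by linarith : ((inp k : Fin d → ℤ) a : ℝ) = (inp k' : Fin d → ℤ) a)
  have hterm : ∀ k ∈ univ.erase i, normOverlap (R.submatrix inp id) i k ≤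
      latticeExpSumBound d (1 / (100 * ξ)) * exp ((vt - L) / ξ) *
        exp (-(4 * euclNormZ (φ i k))) := by
    intro k hk
    have hu : 1 ≤ euclNormZ (φ i k) := by
      refine one_le_euclNormZ fun h0 =>
        ne_of_mem_erase hk (hinj (Subtype.ext (funext fun a => ?_)))
      have := hφ i k a
      simp only [h0, Pi.zero_apply, Int.cast_zero, mul_zero, sub_eq_zero] at this
      exact_mod_cast this.symm
    rw [normOverlap_apply]
    refine (sum_norm_mul_norm_le_of_decay hξ hR _ _).trans ?_
    rw [mul_assoc, ← exp_add]
    refine mul_le_mul_of_nonneg_left (exp_le_exp.mpr ?_)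
      (latticeExpSumBound_pos d (by positivity)).le
    set u := euclNormZ (φ i k)
    have hexp : (vt - L) / ξ + -(4 * u) = (vt - L - 4 * u * ξ) / ξ := by
      field_simp
      ring
    rw [hdist, hexp]
    refine div_le_div_of_nonneg_right ?_ hξ.le
    -- `vt + L + 4 u ξ ≤ 1.9 L + 0.04 L u ≤ 1.98 L u`, using `u ≥ 1`
    nlinarith
  calc ∑ k ∈ univ.erase i, normOverlap (R.submatrix inp id) i k
      ≤ ∑ k ∈ univ.erase i, latticeExpSumBound d (1 / (100 * ξ)) * exp ((vt - L) / ξ) *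
          exp (-(4 * euclNormZ (φ i k))) := sum_le_sum hterm
    _ = latticeExpSumBound d (1 / (100 * ξ)) * exp ((vt - L) / ξ) *
          ∑ x ∈ (univ.erase i).image (φ i), exp (-(4 * euclNormZ x)) := by
        rw [sum_image hφ_inj, mul_sum]
    _ ≤ latticeExpSumBound d (1 / (100 * ξ)) * exp ((vt - L) / ξ) * latticeExpSumBound d 4 := by
        gcongr
        · exact mul_nonneg (latticeExpSumBound_pos d (by positivity)).le (exp_pos _).le
        · exact sum_exp_neg_mul_euclNormZ_le four_pos _
    _ = _ := by ring

end LiebRobinson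

theorem stmt0_general (d : ℕ) (ξ : ℝ) (hξ : 0 < ξ) :
    ∃ C : ℝ, 0 < C ∧ ∃ L₀ : ℝ, 0 < L₀ ∧
      ∀ (V : Finset (Fin d → ℤ)), V.Nonempty →
      ∀ n : ℕ, 2 ≤ n →
      ∀ inp : Fin n → ↥V, Function.Injective inp →
      ∀ R : Matrix ↥V ↥V ℂ, R ∈ Matrix.unitaryGroup ↥V ℂ →
      ∀ v t L : ℝ, 0 ≤ v → 0 ≤ t → 0 < L →
      (∀ j k : ↥V, ‖R j k‖ ≤
        min 1 (Real.exp ((v * t - euclNormZ ((j : Fin d → ℤ) - (k : Fin d → ℤ))) / ξ))) →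
      (∀ i i' : Fin n, ∃ x : Fin d → ℤ, ∀ a : Fin d,
        (((inp i : Fin d → ℤ) a : ℝ) - ((inp i' : Fin d → ℤ) a : ℝ)) = 2 * L * (x a : ℝ)) →
      L₀ ≤ L → v * t ≤ 0.9 * L →
      (n : ℝ) * L ^ (d - 1) * Real.exp ((v * t - L) / ξ) ≤ 1 →
      (1 / (2 * (n.factorial : ℝ))) *
        ∑ out : Fin n → ↥V,
          |‖∑ σ : Equiv.Perm (Fin n), ∏ i : Fin n, R (inp i) (out (σ i))‖ ^ 2
            - ∑ σ : Equiv.Perm (Fin n), ∏ i : Fin n, ‖R (inp i) (out (σ i))‖ ^ 2|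
        ≤ C * (n : ℝ) ^ 2 * L ^ (2 * (d - 1)) * Real.exp (2 * (v * t - L) / ξ) := by
  set K := latticeExpSumBound d (1 / (100 * ξ)) * latticeExpSumBound d 4
  have hK : 0 < K :=
    mul_pos (latticeExpSumBound_pos d (by positivity)) (latticeExpSumBound_pos d four_pos)
  refine ⟨K ^ 2 * exp K, by positivity, max 1 (100 * ξ), by positivity, ?_⟩
  intro V _ n _ inp hinj R hR v t L _ _ hL hLR hlat hL₀ hvt hsmall
  have hL1 : 1 ≤ L := le_of_max_le_left hL₀
  set s := K * exp ((v * t - L) / ξ)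
  have hns : n * s ≤ K := by
    have : (n : ℝ) * exp ((v * t - L) / ξ) ≤ 1 :=
      le_trans (by gcongr; exact le_mul_of_one_le_right (by positivity) (one_le_pow₀ hL1)) hsmall
    nlinarith
  have hbound := sum_abs_norm_sum_perm_sq_sub_le_of_normOverlap (R.submatrix inp id)
    (s := s) (by positivity) (fun i => (normOverlap_submatrix_self_eq_one hR inp i).le)
    (sum_normOverlap_erase_le hξ (fun j k => (hLR j k).trans (min_le_right _ _)) hinj hL hlat
      (le_of_max_le_right hL₀) hvt)
  rw [Fintype.card_fin] at hbound
  have hsq : exp ((v * t - L) / ξ) ^ 2 = exp (2 * (v * t - L) / ξ) := by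
    rw [← exp_nat_mul]
    ring_nf
  calc _ ≤ 1 / (2 * n.factorial) * (n.factorial * ((n * s) ^ 2 * exp (n * s))) :=
        mul_le_mul_of_nonneg_left hbound (by positivity)
    _ = (n * s) ^ 2 * exp (n * s) / 2 := by field_simp
    _ ≤ (n * s) ^ 2 * exp K := by
        linarith [show (n * s) ^ 2 * exp (n * s) ≤ (n * s) ^ 2 * exp K by gcongr,
          show 0 ≤ (n * s) ^ 2 * exp (n * s) by positivity]
    _ = K ^ 2 * exp K * n ^ 2 * exp (2 * (v * t - L) / ξ) := by
        rw [← hsq]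
        ring
    _ ≤ _ := mul_le_mul_of_nonneg_right
        (le_mul_of_one_le_right (by positivity) (one_le_pow₀ hL1)) (exp_pos _).le

/-- Lemma 1: variation distance between the bosonic and the distinguishable-particle
output distributions at short times. -/
theorem stmt0 (d : ℕ) (hd : 1 ≤ d) (ξ : ℝ) (hξ : 0 < ξ) :
    ∃ C : ℝ, 0 < C ∧ ∃ L₀ : ℝ, 0 < L₀ ∧
      ∀ (V : Finset (Fin d → ℤ)), V.Nonempty →
      ∀ n : ℕ, 2 ≤ n →
      ∀ inp : Fin n → ↥V, Function.Injective inp →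
      ∀ R : Matrix ↥V ↥V ℂ, R ∈ Matrix.unitaryGroup ↥V ℂ →
      ∀ v t L : ℝ, 0 ≤ v → 0 ≤ t → 0 < L →
      (∀ j k : ↥V, ‖R j k‖ ≤
        min 1 (Real.exp ((v * t - euclNormZ ((j : Fin d → ℤ) - (k : Fin d → ℤ))) / ξ))) →
      (∀ i i' : Fin n, ∃ x : Fin d → ℤ, ∀ a : Fin d,
        (((inp i : Fin d → ℤ) a : ℝ) - ((inp i' : Fin d → ℤ) a : ℝ)) = 2 * L * (x a : ℝ)) →
      L₀ ≤ L → v * t ≤ 0.9 * L →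
      (n : ℝ) * L ^ (d - 1) * Real.exp ((v * t - L) / ξ) ≤ 1 →
      (1 / (2 * (n.factorial : ℝ))) *
        ∑ out : Fin n → ↥V,
          |‖∑ σ : Equiv.Perm (Fin n), ∏ i : Fin n, R (inp i) (out (σ i))‖ ^ 2
            - ∑ σ : Equiv.Perm (Fin n), ∏ i : Fin n, ‖R (inp i) (out (σ i))‖ ^ 2|
        ≤ C * (n : ℝ) ^ 2 * L ^ (2 * (d - 1)) * Real.exp (2 * (v * t - L) / ξ) :=
  stmt0_general d ξ hξ
end

section
/- Let V be a finite nonempty type, n ≥ 1 an integer, R : V × V → ℂ any matrix, and in : Fin n → V any function. Then (1/(2·n!)) · Σ_{out : Fin n → V} | Σ_{σ, τ ∈ Perm(Fin n), σ ≠ τ} (Π_{i} R(in(i), out(σ(i)))) · conj(Π_{i} R(in(i), out(τ(i)))) | ≤ (1/2) · Σ_{ρ ∈ Perm(Fin n), ρ ≠ id} Σ_{j : Fin n → V} Π_{i} |R(in(i), j(i))| · |R(in(ρ(i)), j(i))|. -/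
open Finset

/-!
Bound each cross-term by the product of moduli (triangle inequality) and sum over `out`
first: substituting `j = out ∘ σ` turns the `(σ, τ)` term into a sum over `j` depending only
on `ρ = τ⁻¹ * σ`, which is `≠ 1` exactly when `σ ≠ τ`. Every such `ρ` arises from `n!` pairs,
which cancels the `n!` in the normalisation.
-/

theorem Fintype.sum_sum_ite_ne_inv_mul {G M : Type*} [Group G] [Fintype G] [DecidableEq G]
    [AddCommMonoid M] (f : G → M) :
    ∑ σ : G, ∑ τ : G, (if σ ≠ τ then f (τ⁻¹ * σ) else 0) =
      Fintype.card G • ∑ ρ : G, (if ρ ≠ 1 then f ρ else 0) := by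
  rw [sum_comm, ← card_univ, ← sum_const]
  refine Finset.sum_congr rfl fun τ _ => ?_
  rw [← Equiv.sum_comp (Equiv.mulLeft τ⁻¹) fun ρ => if ρ ≠ 1 then f ρ else 0]
  simp only [Equiv.coe_mulLeft, ne_eq, inv_mul_eq_one, eq_comm]

theorem Equiv.Perm.sum_prod_comp_mul_prod_comp {ι V S : Type*} [Fintype ι] [DecidableEq ι]
    [Fintype V] [CommSemiring S] (f g : ι → V → S) (σ τ : Equiv.Perm ι) :
    ∑ x : ι → V, (∏ i, f i (x (σ i))) * ∏ i, g i (x (τ i)) =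
      ∑ j : ι → V, ∏ i, f i (j i) * g ((τ⁻¹ * σ) i) (j i) := by
  rw [← (Equiv.arrowCongr σ (Equiv.refl V)).sum_comp]
  refine Finset.sum_congr rfl fun x _ => ?_
  simp only [Equiv.arrowCongr_apply, Equiv.coe_refl, Function.comp_apply, id_eq,
    Equiv.symm_apply_apply, prod_mul_distrib]
  congr 1
  exact Fintype.prod_equiv (σ⁻¹ * τ) _ _ fun i => by simp [Equiv.Perm.mul_apply]

theorem norm_sum_sum_ite_ne_mul_conj_le {G 𝕜 : Type*} [Fintype G] [DecidableEq G] [RCLike 𝕜]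
    (P : G → 𝕜) :
    ‖∑ σ, ∑ τ, (if σ ≠ τ then P σ * starRingEnd 𝕜 (P τ) else 0)‖ ≤
      ∑ σ, ∑ τ, (if σ ≠ τ then ‖P σ‖ * ‖P τ‖ else 0) := by
  refine (norm_sum_le _ _).trans <| sum_le_sum fun σ _ => (norm_sum_le _ _).trans <|
    sum_le_sum fun τ _ => ?_
  split_ifs <;> simp

theorem stmt2_general (V : Type*) [Fintype V] (n : ℕ)
    (R : V → V → ℂ) (inp : Fin n → V) :
    (1 / (2 * (n.factorial : ℝ))) *
      ∑ out : Fin n → V,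
        ‖(∑ σ : Equiv.Perm (Fin n), ∑ τ : Equiv.Perm (Fin n),
          if σ ≠ τ then
            (∏ i : Fin n, R (inp i) (out (σ i))) *
              (starRingEnd ℂ) (∏ i : Fin n, R (inp i) (out (τ i)))
          else 0)‖
    ≤ (1 / 2) *
      ∑ ρ : Equiv.Perm (Fin n),
        (if ρ ≠ 1 then
          ∑ j : Fin n → V, ∏ i : Fin n,
            ‖R (inp i) (j i)‖ * ‖R (inp (ρ i)) (j i)‖
        else 0) := by
  have hsum := Fintype.sum_sum_ite_ne_inv_mul fun ρ : Equiv.Perm (Fin n) =>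
    ∑ j : Fin n → V, ∏ i, ‖R (inp i) (j i)‖ * ‖R (inp (ρ i)) (j i)‖
  rw [Fintype.card_perm, Fintype.card_fin, nsmul_eq_mul] at hsum
  calc _ ≤ (1 / (2 * (n.factorial : ℝ))) * ∑ σ : Equiv.Perm (Fin n), ∑ τ : Equiv.Perm (Fin n),
        (if σ ≠ τ then
          ∑ j : Fin n → V, ∏ i, ‖R (inp i) (j i)‖ * ‖R (inp ((τ⁻¹ * σ) i)) (j i)‖
        else 0) := by
        gcongr
        refine (sum_le_sum fun out _ => norm_sum_sum_ite_ne_mul_conj_le _).trans_eq ?_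
        rw [sum_comm]
        refine sum_congr rfl fun σ _ => ?_
        rw [sum_comm]
        refine sum_congr rfl fun τ _ => ?_
        simp only [sum_ite_irrel, sum_const_zero, norm_prod]
        exact congrArg (ite _ · 0) <|
          Equiv.Perm.sum_prod_comp_mul_prod_comp (fun i v => ‖R (inp i) v‖)
            (fun i v => ‖R (inp i) v‖) σ τ
    _ = _ := by
        rw [hsum]
        field_simp

/-- Eq. (S17): the cross-terms of the bosonic output distribution, summed over all
ordered output tuples, are bounded by a sum over non-identity permutations ρ and
intermediate site tuples j. -/
theorem stmt2 (V : Type*) [Fintype V] [Nonempty V] (n : ℕ) (hn : 1 ≤ n)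
    (R : V → V → ℂ) (inp : Fin n → V) :
    (1 / (2 * (n.factorial : ℝ))) *
      ∑ out : Fin n → V,
        ‖(∑ σ : Equiv.Perm (Fin n), ∑ τ : Equiv.Perm (Fin n),
          if σ ≠ τ then
            (∏ i : Fin n, R (inp i) (out (σ i))) *
              (starRingEnd ℂ) (∏ i : Fin n, R (inp i) (out (τ i)))
          else 0)‖
    ≤ (1 / 2) *
      ∑ ρ : Equiv.Perm (Fin n),
        (if ρ ≠ 1 then
          ∑ j : Fin n → V, ∏ i : Fin n,
            ‖R (inp i) (j i)‖ * ‖R (inp (ρ i)) (j i)‖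
        else 0) :=
  stmt2_general V n R inp
end

section
/- Let n ≥ 1 be an integer, V a finite nonempty type, c ≥ 0 a real number, and g : Fin n → V → Fin n → ℝ a nonnegative function. Assume that for every i ∈ Fin n: (a) Σ_{j ∈ V} g(i, j, i) ≤ 1, and (b) Σ_{j ∈ V} Σ_{k ∈ Fin n, k ≠ i} g(i, j, k) ≤ c. Then Σ_{ρ ∈ Perm(Fin n), ρ ≠ id} Π_{i ∈ Fin n} ( Σ_{j ∈ V} g(i, j, ρ(i)) ) ≤ (1 + c)^n − n·c − 1. -/
/-!
Group the non-identity permutations by their support `S`, which has at least two elements.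
Fixed points contribute factors `f i i ≤ 1`, and a permutation with support `S` is determined by
its restriction to `S`, a choice of an off-diagonal entry in each row `i ∈ S`; so the permutations
with support `S` contribute at most `∏ i ∈ S, ∑ k ≠ i, f i k ≤ c ^ #S`. Summing over `S` gives
`∑_{l ≥ 2} (n choose l) c ^ l = (1 + c) ^ n - n c - 1`.
-/

open Finset Equiv

theorem sum_powerset_filter_two_le_card_pow {β R : Type*} [CommRing R] (s : Finset β) (c : R) :
    ∑ t ∈ s.powerset with 2 ≤ #t, c ^ #t = (1 + c) ^ #s - #s * c - 1 := by
  rw [sum_filter, sum_powerset_apply_card (fun k => if 2 ≤ k then c ^ k else 0), add_comm 1 c,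
    add_pow]
  rcases #s with _ | _ | n
  · simp
  · simp [sum_range_succ]
  · simp [sum_range_succ' _ (n + 2), sum_range_succ' _ (n + 1), nsmul_eq_mul, mul_comm]
    ring

namespace Equiv.Perm

variable {α : Type*} [Fintype α] [DecidableEq α] {f : α → α → ℝ}

theorem prod_apply_le_prod_support (hf : ∀ i k, 0 ≤ f i k) (hdiag : ∀ i, f i i ≤ 1)
    (σ : Perm α) : ∏ i, f i (σ i) ≤ ∏ i ∈ σ.support, f i (σ i) :=
  prod_le_prod_of_subset_of_le_one (subset_univ _) (fun i _ => hf _ _) fun i _ hi => by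
    rw [notMem_support.1 hi]
    exact hdiag i

theorem sum_filter_support_eq_prod_le_prod_sum_erase (hf : ∀ i k, 0 ≤ f i k)
    (s : Finset (Perm α)) (S : Finset α) :
    ∑ σ ∈ s with σ.support = S, ∏ i ∈ S, f i (σ i) ≤ ∏ i ∈ S, ∑ k ∈ univ.erase i, f i k := by
  let restrict (σ : Perm α) : ∀ i ∈ S, α := fun i _ => σ i
  have hinj : Set.InjOn restrict (s.filter (·.support = S)) := by
    intro σ hσ τ hτ hστ
    obtain ⟨-, hσS⟩ := mem_filter.1 hσ
    obtain ⟨-, hτS⟩ := mem_filter.1 hτ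
    ext i
    by_cases hi : i ∈ S
    · exact congr_fun₂ hστ i hi
    · rw [notMem_support.1 (hσS ▸ hi), notMem_support.1 (hτS ▸ hi)]
  have hmaps : (s.filter (·.support = S)).image restrict ⊆ S.pi fun i => univ.erase i := by
    simp only [subset_iff, mem_image, mem_filter, mem_pi, mem_erase]
    rintro _ ⟨σ, ⟨-, rfl⟩, rfl⟩ i hi
    exact ⟨mem_support.1 hi, mem_univ _⟩
  calc ∑ σ ∈ s with σ.support = S, ∏ i ∈ S, f i (σ i)
      = ∑ p ∈ (s.filter (·.support = S)).image restrict, ∏ x ∈ S.attach, f x.1 (p x.1 x.2) := by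
        rw [sum_image hinj]
        exact sum_congr rfl fun σ _ => (prod_attach S fun i => f i (σ i)).symm
    _ ≤ ∑ p ∈ S.pi fun i => univ.erase i, ∏ x ∈ S.attach, f x.1 (p x.1 x.2) :=
        sum_le_sum_of_subset_of_nonneg hmaps fun p _ _ => prod_nonneg fun x _ => hf _ _
    _ = ∏ i ∈ S, ∑ k ∈ univ.erase i, f i k := (prod_sum S _ f).symm

theorem sum_ne_one_prod_apply_le {c : ℝ} (hf : ∀ i k, 0 ≤ f i k) (hdiag : ∀ i, f i i ≤ 1)
    (hoff : ∀ i, ∑ k ∈ univ.erase i, f i k ≤ c) :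
    ∑ σ : Perm α with σ ≠ 1, ∏ i, f i (σ i) ≤
      (1 + c) ^ Fintype.card α - Fintype.card α * c - 1 := by
  have hsupport : ∀ σ ∈ univ.filter (· ≠ (1 : Perm α)),
      σ.support ∈ (univ : Finset α).powerset.filter (2 ≤ #·) := fun σ hσ =>
    mem_filter.2 ⟨mem_powerset.2 (subset_univ _),
      one_lt_card_support_of_ne_one (mem_filter.1 hσ).2⟩
  calc ∑ σ : Perm α with σ ≠ 1, ∏ i, f i (σ i)
      ≤ ∑ σ : Perm α with σ ≠ 1, ∏ i ∈ σ.support, f i (σ i) :=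
        sum_le_sum fun σ _ => prod_apply_le_prod_support hf hdiag σ
    _ = ∑ S ∈ (univ : Finset α).powerset with 2 ≤ #S,
          ∑ σ ∈ univ.filter (· ≠ (1 : Perm α)) with σ.support = S, ∏ i ∈ S, f i (σ i) := by
        rw [← sum_fiberwise_of_maps_to hsupport]
        refine sum_congr rfl fun S _ => sum_congr rfl fun σ hσ => ?_
        rw [(mem_filter.1 hσ).2]
    _ ≤ ∑ S ∈ (univ : Finset α).powerset with 2 ≤ #S, c ^ #S := by
        refine sum_le_sum fun S _ => (sum_filter_support_eq_prod_le_prod_sum_erase hf _ S).trans ?_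
        exact (prod_le_prod (fun i _ => sum_nonneg fun k _ => hf i k) fun i _ => hoff i).trans_eq
          (prod_const c)
    _ = (1 + c) ^ Fintype.card α - Fintype.card α * c - 1 :=
        sum_powerset_filter_two_le_card_pow univ c

end Equiv.Perm

theorem stmt3_general (n : ℕ) (V : Type*) [Fintype V]
    (c : ℝ) (g : Fin n → V → Fin n → ℝ)
    (hg : ∀ i j k, 0 ≤ g i j k)
    (ha : ∀ i : Fin n, ∑ j : V, g i j i ≤ 1)
    (hb : ∀ i : Fin n, ∑ j : V, ∑ k ∈ Finset.univ.filter (fun k => k ≠ i), g i j k ≤ c) :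
    ∑ ρ : Equiv.Perm (Fin n),
        (if ρ ≠ 1 then ∏ i : Fin n, (∑ j : V, g i j (ρ i)) else 0)
      ≤ (1 + c) ^ n - n * c - 1 := by
  have hrow : ∀ i, ∑ k ∈ univ.erase i, ∑ j, g i j k ≤ c := fun i => by
    simpa only [sum_comm (s := univ.erase i), filter_ne'] using hb i
  simpa only [sum_filter, Fintype.card_fin] using
    Perm.sum_ne_one_prod_apply_le (fun i k => sum_nonneg fun j _ => hg i j k) ha hrow

/-- Eqs. (S19)–(S21): fixed-point decomposition of the sum over non-identity
permutations, bounded by the binomial series `(1+c)^n − n·c − 1`. -/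
theorem stmt3 (n : ℕ) (hn : 1 ≤ n) (V : Type*) [Fintype V] [Nonempty V]
    (c : ℝ) (hc : 0 ≤ c) (g : Fin n → V → Fin n → ℝ)
    (hg : ∀ i j k, 0 ≤ g i j k)
    (ha : ∀ i : Fin n, ∑ j : V, g i j i ≤ 1)
    (hb : ∀ i : Fin n, ∑ j : V, ∑ k ∈ Finset.univ.filter (fun k => k ≠ i), g i j k ≤ c) :
    ∑ ρ : Equiv.Perm (Fin n),
        (if ρ ≠ 1 then ∏ i : Fin n, (∑ j : V, g i j (ρ i)) else 0)
      ≤ (1 + c) ^ n - n * c - 1 :=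
  stmt3_general n V c g hg ha hb
end
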